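/- Let (X,T) be a topological dynamical system. If (Ψ_k)_{k∈ℕ} is a sequence of continuous partitions of unity on X with diam(Ψ_k) → 0 as k → ∞, then for every T-invariant Borel probability measure μ on X, lim_{k→∞} h̃_μ(T,Ψ_k) = h̃_μ(T). -/

import Mathlib

open MeasureTheory Filter Set

/-! ### Partitions of unity -/

/-- A finite partition of unity on `X`: a finite family of functions `X → [0,1]`
summing to `1` everywhere. -/
structure PartUnity (X : Type*) where
  n : ℕ
  f : Fin n → X → ℝ
  nonneg : ∀ i x, 0 ≤ f i x
  le_one : ∀ i x, f i x ≤ 1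
  sum_one : ∀ x, ∑ i, f i x = 1

namespace PartUnity

variable {X Y : Type*}

/-- A continuous partition of unity. -/
def Cont [TopologicalSpace X] (Φ : PartUnity X) : Prop := ∀ i, Continuous (Φ.f i)

/-- A measurable partition of unity. -/
def Meas [MeasurableSpace X] (Φ : PartUnity X) : Prop := ∀ i, Measurable (Φ.f i)

/-- A positive partition of unity. -/
def Pos (Φ : PartUnity X) : Prop := ∀ i x, 0 < Φ.f i x

/-- The join `Φ ∨ Ψ = {φ·ψ : φ ∈ Φ, ψ ∈ Ψ}` of two partitions of unity. -/
def join (Φ Ψ : PartUnity X) : PartUnity X where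
  n := Φ.n * Ψ.n
  f k x := Φ.f (finProdFinEquiv.symm k).1 x * Ψ.f (finProdFinEquiv.symm k).2 x
  nonneg k x := mul_nonneg (Φ.nonneg _ x) (Ψ.nonneg _ x)
  le_one k x := mul_le_one₀ (Φ.le_one _ x) (Ψ.nonneg _ x) (Ψ.le_one _ x)
  sum_one x := by
    rw [← Equiv.sum_comp (finProdFinEquiv : Fin Φ.n × Fin Ψ.n ≃ Fin (Φ.n * Ψ.n))
      (fun k => Φ.f (finProdFinEquiv.symm k).1 x * Ψ.f (finProdFinEquiv.symm k).2 x)]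
    simp only [Equiv.symm_apply_apply]
    rw [Fintype.sum_prod_type]
    dsimp only
    rw [← Finset.sum_mul_sum, Φ.sum_one x, Ψ.sum_one x, one_mul]

/-- Pull back a partition of unity by a map: `TΦ = {φ ∘ T : φ ∈ Φ}`. -/
def comp (Φ : PartUnity X) (T : Y → X) : PartUnity Y where
  n := Φ.n
  f i y := Φ.f i (T y)
  nonneg i y := Φ.nonneg i (T y)
  le_one i y := Φ.le_one i (T y)
  sum_one y := Φ.sum_one (T y)

/-- The trivial partition of unity `{1}`. -/
def triv (X : Type*) : PartUnity X where
  n := 1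
  f _ _ := 1
  nonneg _ _ := zero_le_one
  le_one _ _ := le_rfl
  sum_one _ := by simp

/-- `dyn T Φ n` is the dynamical join `Φ₀ⁿ⁻¹ = ⋁_{i=0}^{n-1} TⁱΦ`
(joined with a harmless trivial factor). -/
def dyn (T : X → X) (Φ : PartUnity X) : ℕ → PartUnity X
  | 0 => triv X
  | n + 1 => Φ.join ((dyn T Φ n).comp T)

/-- The product partition of unity `Φ ⊗ Ψ` on `X × Y`. -/
def prod (Φ : PartUnity X) (Ψ : PartUnity Y) : PartUnity (X × Y) where
  n := Φ.n * Ψ.n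
  f k p := Φ.f (finProdFinEquiv.symm k).1 p.1 * Ψ.f (finProdFinEquiv.symm k).2 p.2
  nonneg k p := mul_nonneg (Φ.nonneg _ _) (Ψ.nonneg _ _)
  le_one k p := mul_le_one₀ (Φ.le_one _ _) (Ψ.nonneg _ _) (Ψ.le_one _ _)
  sum_one p := by
    rw [← Equiv.sum_comp (finProdFinEquiv : Fin Φ.n × Fin Ψ.n ≃ Fin (Φ.n * Ψ.n))
      (fun k => Φ.f (finProdFinEquiv.symm k).1 p.1 * Ψ.f (finProdFinEquiv.symm k).2 p.2)]
    simp only [Equiv.symm_apply_apply]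
    rw [Fintype.sum_prod_type]
    dsimp only
    rw [← Finset.sum_mul_sum, Φ.sum_one p.1, Ψ.sum_one p.2, one_mul]

/-- The diameter of a partition of unity: the maximum of the diameters of the
supports of its members. -/
noncomputable def diam [PseudoMetricSpace X] (Φ : PartUnity X) : ℝ :=
  ⨆ i, Metric.diam (tsupport (Φ.f i))

end PartUnity

/-! ### Metric entropy via partitions of unity -/

variable {X Y : Type*}

/-- The static entropy `H̃_μ(Φ) = Σ_φ ( −μ(φ) log μ(φ) + μ(φ log φ) )`. -/
noncomputable def statEnt [MeasurableSpace X] (μ : Measure X) (Φ : PartUnity X) : ℝ :=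
  ∑ i, (-((∫ x, Φ.f i x ∂μ) * Real.log (∫ x, Φ.f i x ∂μ)) +
    ∫ x, Φ.f i x * Real.log (Φ.f i x) ∂μ)

/-- The conditional measure `μ_ψ`, determined by `μ_ψ(φ) = μ(φψ)/μ(ψ)`. -/
noncomputable def condMeas [MeasurableSpace X] (μ : Measure X) (ψ : X → ℝ) : Measure X :=
  (ENNReal.ofReal (∫ x, ψ x ∂μ))⁻¹ • μ.withDensity (fun x => ENNReal.ofReal (ψ x))

/-- The conditional static entropy `H̃_μ(Φ | Ψ) = Σ_ψ μ(ψ) H̃_{μ_ψ}(Φ)`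
(terms with `μ(ψ) = 0` vanish since they are multiplied by `μ(ψ) = 0`). -/
noncomputable def condStatEnt [MeasurableSpace X] (μ : Measure X) (Φ Ψ : PartUnity X) : ℝ :=
  ∑ j, (∫ x, Ψ.f j x ∂μ) * statEnt (condMeas μ (Ψ.f j)) Φ

/-- The local metric entropy `h̃_μ(T,Φ) = lim_n H̃_μ(Φ₀ⁿ⁻¹)/n`. -/
noncomputable def locEnt [MeasurableSpace X] (T : X → X) (μ : Measure X) (Φ : PartUnity X) : ℝ :=
  Filter.atTop.limsup fun n : ℕ => statEnt μ (PartUnity.dyn T Φ n) / (n : ℝ)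

/-- The local conditional metric entropy `h̃_μ(T,Φ|Ψ) = lim_n H̃_μ(Φ₀ⁿ⁻¹|Ψ₀ⁿ⁻¹)/n`. -/
noncomputable def condLocEnt [MeasurableSpace X] (T : X → X) (μ : Measure X)
    (Φ Ψ : PartUnity X) : ℝ :=
  Filter.atTop.limsup fun n : ℕ =>
    condStatEnt μ (PartUnity.dyn T Φ n) (PartUnity.dyn T Ψ n) / (n : ℝ)

/-- The metric entropy `h̃_μ(T)`: supremum of `h̃_μ(T,Φ)` over continuous
partitions of unity. -/
noncomputable def metEnt [TopologicalSpace X] [MeasurableSpace X]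
    (T : X → X) (μ : Measure X) : EReal :=
  ⨆ Φ : {Φ : PartUnity X // Φ.Cont}, ((locEnt T μ Φ.1 : ℝ) : EReal)

/-! ### Topological entropy via partitions of unity -/

/-- The topological static entropy `H̃(Φ) = Σ_φ sup φ`. -/
noncomputable def topStat (Φ : PartUnity X) : ℝ := ∑ i, ⨆ x, Φ.f i x

/-- The local topological entropy `h̃(T,Φ) = lim_n (1/n) log H̃(Φ₀ⁿ⁻¹)`. -/
noncomputable def topLocEnt (T : X → X) (Φ : PartUnity X) : ℝ :=
  Filter.atTop.limsup fun n : ℕ => Real.log (topStat (PartUnity.dyn T Φ n)) / (n : ℝ)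

/-- The topological entropy `h̃_top(T)`: supremum of `h̃(T,Φ)` over continuous
partitions of unity. -/
noncomputable def topEnt [TopologicalSpace X] (T : X → X) : EReal :=
  ⨆ Φ : {Φ : PartUnity X // Φ.Cont}, ((topLocEnt T Φ.1 : ℝ) : EReal)

/-! ### Classical Kolmogorov–Sinai entropy -/

/-- A finite Borel partition of `X` (indexed; atoms may be empty). -/
structure FinBorelPart (X : Type*) [MeasurableSpace X] where
  n : ℕ
  A : Fin n → Set X
  meas : ∀ i, MeasurableSet (A i)
  disj : ∀ i j, i ≠ j → Disjoint (A i) (A j)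
  cover : ⋃ i, A i = Set.univ

/-- Local Kolmogorov–Sinai entropy `h_μ(T,𝒜) = lim_n (1/n) Σ_{A ∈ 𝒜₀ⁿ⁻¹} −μ(A) log μ(A)`. -/
noncomputable def ksLocEnt [MeasurableSpace X] (T : X → X) (μ : Measure X)
    (P : FinBorelPart X) : ℝ :=
  Filter.atTop.limsup fun n : ℕ =>
    (∑ σ : Fin n → Fin P.n,
      Real.negMulLog (μ (⋂ i : Fin n, T^[(i : ℕ)] ⁻¹' P.A (σ i))).toReal) / (n : ℝ)

/-- The Kolmogorov–Sinai metric entropy `h_μ(T)`. -/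
noncomputable def ksEnt [MeasurableSpace X] (T : X → X) (μ : Measure X) : EReal :=
  ⨆ P : FinBorelPart X, ((ksLocEnt T μ P : ℝ) : EReal)

/-! ### Classical topological entropy via open covers -/

/-- A finite open cover of `X`. -/
structure FinOpenCover (X : Type*) [TopologicalSpace X] where
  n : ℕ
  U : Fin n → Set X
  opn : ∀ i, IsOpen (U i)
  cov : ⋃ i, U i = Set.univ

/-- The member `⋂_{i<n} T^{-i} U_{σ(i)}` of the dynamical refinement of a cover. -/
def dynSet (T : X → X) {m : ℕ} (U : Fin m → Set X) (n : ℕ) (σ : Fin n → Fin m) : Set X :=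
  ⋂ i : Fin n, T^[(i : ℕ)] ⁻¹' U (σ i)

/-- Minimal cardinality of a subfamily of `V` covering `S`. -/
noncomputable def coverNum {α : Type*} [Fintype α] (V : α → Set X) (S : Set X) : ℕ :=
  sInf {k | ∃ t : Finset α, t.card = k ∧ S ⊆ ⋃ i ∈ t, V i}

/-- The local classical topological entropy `h(T,𝒰)` of an open cover. -/
noncomputable def covLocEnt [TopologicalSpace X] (T : X → X) (C : FinOpenCover X) : ℝ :=
  Filter.atTop.limsup fun n : ℕ =>
    Real.log ((coverNum (fun σ : Fin n → Fin C.n => dynSet T C.U n σ) Set.univ : ℕ) : ℝ) / (n : ℝ)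

/-- The classical topological entropy `h_top(T)` via open covers. -/
noncomputable def topEntCov [TopologicalSpace X] (T : X → X) : EReal :=
  ⨆ C : FinOpenCover X, ((covLocEnt T C : ℝ) : EReal)

/-! ### Misiurewicz topological tail entropy -/

/-- The local conditional topological entropy `h(𝒰|𝒱)` of two open covers. -/
noncomputable def misCondLoc [TopologicalSpace X] (T : X → X) (CU CV : FinOpenCover X) : ℝ :=
  Filter.atTop.limsup fun n : ℕ =>
    Real.log (((⨆ τ : Fin n → Fin CV.n,
      coverNum (fun σ : Fin n → Fin CU.n => dynSet T CU.U n σ) (dynSet T CV.U n τ) : ℕ)) : ℝ) / (n : ℝ)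

/-- The conditional topological entropy `h(T|𝒱) = sup_𝒰 h(𝒰|𝒱)`. -/
noncomputable def misCond [TopologicalSpace X] (T : X → X) (CV : FinOpenCover X) : EReal :=
  ⨆ CU : FinOpenCover X, ((misCondLoc T CU CV : ℝ) : EReal)

/-- Misiurewicz's topological tail entropy `h*(T) = inf_𝒱 h(T|𝒱)`. -/
noncomputable def misTail [TopologicalSpace X] (T : X → X) : EReal :=
  ⨅ CV : FinOpenCover X, misCond T CV

/-! ### Topological tail entropy via partitions of unity -/

/-- `H̃(Φ|ψ) = Σ_φ sup_{supp ψ} φ`. -/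
noncomputable def condTopStatPU [TopologicalSpace X] (Φ : PartUnity X) (ψ : X → ℝ) : ℝ :=
  ∑ i, ⨆ x ∈ tsupport ψ, Φ.f i x

/-- The weight set `D(Ψ) = {a : inf ψ ≤ a_ψ ≤ sup ψ, Σ a_ψ = 1}`. -/
def weights (Ψ : PartUnity X) : Set (Fin Ψ.n → ℝ) :=
  {a | (∀ j, (⨅ x, Ψ.f j x) ≤ a j ∧ a j ≤ ⨆ x, Ψ.f j x) ∧ ∑ j, a j = 1}

/-- `H̃_n(Φ|Ψ) = sup_{a ∈ D(Ψ₀ⁿ⁻¹)} Σ_ψ a_ψ H̃(Φ₀ⁿ⁻¹|ψ)`. -/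
noncomputable def tailStat [TopologicalSpace X] (T : X → X) (Φ Ψ : PartUnity X) (n : ℕ) : ℝ :=
  sSup {r | ∃ a ∈ weights (PartUnity.dyn T Ψ n),
    r = ∑ j, a j * condTopStatPU (PartUnity.dyn T Φ n) ((PartUnity.dyn T Ψ n).f j)}

/-- The local conditional topological entropy `h̃(Φ|Ψ) = limsup_n (1/n) log H̃_n(Φ|Ψ)`. -/
noncomputable def tailLoc [TopologicalSpace X] (T : X → X) (Φ Ψ : PartUnity X) : ℝ :=
  Filter.atTop.limsup fun n : ℕ => Real.log (tailStat T Φ Ψ n) / (n : ℝ)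

/-- The conditional topological entropy `h̃(T|Ψ) = sup_Φ h̃(Φ|Ψ)` over continuous `Φ`. -/
noncomputable def condTopEntPU [TopologicalSpace X] (T : X → X) (Ψ : PartUnity X) : EReal :=
  ⨆ Φ : {Φ : PartUnity X // Φ.Cont}, ((tailLoc T Φ.1 Ψ : ℝ) : EReal)

/-- The topological tail entropy `h̃*(T) = inf_Ψ h̃(T|Ψ)` over continuous `Ψ`. -/
noncomputable def tailEntPU [TopologicalSpace X] (T : X → X) : EReal :=
  ⨅ Ψ : {Ψ : PartUnity X // Ψ.Cont}, condTopEntPU T Ψ.1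

/-! ### Pressures -/

/-- The Birkhoff sum `S_n g = Σ_{i<n} g ∘ Tⁱ`. -/
def birkhoff (T : X → X) (g : X → ℝ) (n : ℕ) (x : X) : ℝ :=
  ∑ i ∈ Finset.range n, g (T^[i] x)

/-- The static pressure `P̃(T,g,Φ,n) = Σ_{φ ∈ Φ₀ⁿ⁻¹} sup (φ e^{S_n g})`. -/
noncomputable def puPressStat (T : X → X) (g : X → ℝ) (Φ : PartUnity X) (n : ℕ) : ℝ :=
  ∑ i, ⨆ x, (PartUnity.dyn T Φ n).f i x * Real.exp (birkhoff T g n x)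

/-- The local topological pressure `P̃_top(T,g,Φ) = lim_n (1/n) log P̃(T,g,Φ,n)`. -/
noncomputable def puLocPress (T : X → X) (g : X → ℝ) (Φ : PartUnity X) : ℝ :=
  Filter.atTop.limsup fun n : ℕ => Real.log (puPressStat T g Φ n) / (n : ℝ)

/-- The topological pressure `P̃_top(T,g)` via continuous partitions of unity. -/
noncomputable def puTopPress [TopologicalSpace X] (T : X → X) (g : X → ℝ) : EReal :=
  ⨆ Φ : {Φ : PartUnity X // Φ.Cont}, ((puLocPress T g Φ.1 : ℝ) : EReal)

/-- The classical static pressure of an open cover: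
`inf { Σ_{V ∈ 𝒱} sup_V e^{S_n g} : 𝒱 a subcover of 𝒰₀ⁿ⁻¹ }`. -/
noncomputable def covPressStat [TopologicalSpace X] (T : X → X) (g : X → ℝ)
    (C : FinOpenCover X) (n : ℕ) : ℝ :=
  sInf {r | ∃ t : Finset (Fin n → Fin C.n),
    (Set.univ ⊆ ⋃ σ ∈ t, dynSet T C.U n σ) ∧
    r = ∑ σ ∈ t, ⨆ x ∈ dynSet T C.U n σ, Real.exp (birkhoff T g n x)}

/-- The local classical topological pressure of an open cover. -/
noncomputable def covLocPress [TopologicalSpace X] (T : X → X) (g : X → ℝ)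
    (C : FinOpenCover X) : ℝ :=
  Filter.atTop.limsup fun n : ℕ => Real.log (covPressStat T g C n) / (n : ℝ)

/-- The classical topological pressure `P_top(T,g)` via open covers. -/
noncomputable def topPress [TopologicalSpace X] (T : X → X) (g : X → ℝ) : EReal :=
  ⨆ C : FinOpenCover X, ((covLocPress T g C : ℝ) : EReal)

/-! ### Topological tail pressure -/

/-- `P̃_n(T,g,Φ|Ψ) = sup_{a ∈ D(Ψ₀ⁿ⁻¹)} Σ_ψ a_ψ Σ_φ sup_{supp ψ} (φ e^{S_n g})`. -/
noncomputable def tailPressStat [TopologicalSpace X] (T : X → X) (g : X → ℝ)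
    (Φ Ψ : PartUnity X) (n : ℕ) : ℝ :=
  sSup {r | ∃ a ∈ weights (PartUnity.dyn T Ψ n),
    r = ∑ j, a j * ∑ i, ⨆ x ∈ tsupport ((PartUnity.dyn T Ψ n).f j),
      (PartUnity.dyn T Φ n).f i x * Real.exp (birkhoff T g n x)}

/-- The local topological tail pressure `P̃(T,g,Φ|Ψ) = limsup_n (1/n) log P̃_n(T,g,Φ|Ψ)`. -/
noncomputable def tailLocPress [TopologicalSpace X] (T : X → X) (g : X → ℝ)
    (Φ Ψ : PartUnity X) : ℝ :=
  Filter.atTop.limsup fun n : ℕ => Real.log (tailPressStat T g Φ Ψ n) / (n : ℝ)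

/-- The conditional topological pressure `P̃(T,g|Ψ) = sup_Φ P̃(T,g,Φ|Ψ)` over continuous `Φ`. -/
noncomputable def condTopPressPU [TopologicalSpace X] (T : X → X) (g : X → ℝ)
    (Ψ : PartUnity X) : EReal :=
  ⨆ Φ : {Φ : PartUnity X // Φ.Cont}, ((tailLocPress T g Φ.1 Ψ : ℝ) : EReal)

/-- The topological tail pressure `P̃*(T,g) = inf_Ψ P̃(T,g|Ψ)` over continuous `Ψ`. -/
noncomputable def puTailPress [TopologicalSpace X] (T : X → X) (g : X → ℝ) : EReal :=
  ⨅ Ψ : {Ψ : PartUnity X // Ψ.Cont}, condTopPressPU T g Ψ.1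

/-! ### Classical topological tail pressure (Li–Chen–Cheng) -/

/-- The Bowen ball `B(x,ε,n) = {y : d(Tⁱx,Tⁱy) < ε for all 0 ≤ i < n}`. -/
def bowenBall [PseudoMetricSpace X] (T : X → X) (x : X) (ε : ℝ) (n : ℕ) : Set X :=
  {y | ∀ i < n, dist (T^[i] x) (T^[i] y) < ε}

/-- `E` is `(n,δ)`-separated: distinct points `y,z ∈ E` satisfy `d(Tⁱy,Tⁱz) > δ`
for some `0 ≤ i < n`. -/
def IsSep [PseudoMetricSpace X] (T : X → X) (n : ℕ) (δ : ℝ) (E : Finset X) : Prop :=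
  ∀ y ∈ E, ∀ z ∈ E, y ≠ z → ∃ i < n, δ < dist (T^[i] y) (T^[i] z)

/-- `P_n(T,g,δ,ε) = sup_x sup { Σ_{y∈E} e^{S_n g(y)} : E (n,δ)-separated ⊆ B(x,ε,n) }`. -/
noncomputable def sepPress [PseudoMetricSpace X] (T : X → X) (g : X → ℝ)
    (n : ℕ) (δ ε : ℝ) : ℝ :=
  ⨆ x : X, sSup {r | ∃ E : Finset X, ↑E ⊆ bowenBall T x ε n ∧ IsSep T n δ E ∧
    r = ∑ y ∈ E, Real.exp (birkhoff T g n y)}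

/-- The classical topological tail pressure
`P*(T,g) = lim_{ε→0} lim_{δ→0} limsup_n (1/n) log P_n(T,g,δ,ε)`
(the inner limits are monotone, hence given by `inf_ε sup_δ`). -/
noncomputable def tailPress [PseudoMetricSpace X] (T : X → X) (g : X → ℝ) : EReal :=
  ⨅ ε : {ε : ℝ // 0 < ε}, ⨆ δ : {δ : ℝ // 0 < δ},
    Filter.atTop.limsup fun n : ℕ => ((Real.log (sepPress T g n δ.1 ε.1) / (n : ℝ) : ℝ) : EReal)

/-!
Write `η = negMulLog` and `H̃_μ(Φ | Ψ) = Σ_ψ μ(ψ) H̃_{μ_ψ}(Φ)`. The chain rule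
`H̃_μ(Φ ∨ Ψ) = H̃_μ(Ψ) + H̃_μ(Φ | Ψ)`, the concavity of `η` (conditioning on a finer partition
lowers `H̃_μ(Φ | ·)`) and the invariance of `μ` give
`H̃_μ(Φ₀ⁿ⁻¹) ≤ H̃_μ(Ψ₀ⁿ⁻¹) + n H̃_μ(Φ | Ψ)`, hence `h̃_μ(T,Φ) ≤ h̃_μ(T,Ψ) + H̃_μ(Φ | Ψ)`.
If `diam(Ψ)` is small, every `φ ∈ Φ` is almost constant on the support of every `ψ ∈ Ψ`
(uniform continuity), so `μ_ψ(η ∘ φ)` is close to `η(μ_ψ(φ))` and `H̃_μ(Φ | Ψ)` is small.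
So `h̃_μ(T,Ψ_k) ≤ h̃_μ(T)` eventually exceeds `h̃_μ(T,Φ) - ε` for every continuous `Φ`.
-/

open Topology

namespace Real

lemma negMulLog_le_sub_sub_mul_log {t v : ℝ} (ht : 0 ≤ t) (hv : 0 < v) :
    negMulLog t ≤ v - t - t * log v := by
  rcases ht.eq_or_lt with rfl | ht
  · simpa using hv.le
  · have h : t * log (v / t) ≤ v - t := by
      have := mul_le_mul_of_nonneg_left (log_le_sub_one_of_pos (div_pos hv ht)) ht.le
      rwa [mul_sub, mul_div_cancel₀ _ ht.ne', mul_one] at this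
    rw [log_div hv.ne' ht.ne'] at h
    rw [negMulLog]
    linarith

/-- For `A, B ≥ 0`, `B * negMulLog (A / B)` is the infimum over `v > 0` of the affine functions
`B v - A - A log v`; both Jensen inequalities below are proved through this bound. -/
lemma le_mul_negMulLog_div {L A B : ℝ} (hA : 0 ≤ A) (hB : 0 ≤ B)
    (h : ∀ v > 0, L ≤ B * v - A - A * log v) : L ≤ B * negMulLog (A / B) := by
  rcases hA.eq_or_lt with rfl | hA
  · have hlim : Tendsto (fun v => B * v) (𝓝[>] 0) (𝓝 0) := by
      simpa using ((continuous_const_mul B).tendsto 0).mono_left nhdsWithin_le_nhds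
    simpa using ge_of_tendsto hlim (eventually_nhdsWithin_of_forall fun v hv => by
      simpa using h v hv)
  rcases hB.eq_or_lt with rfl | hB
  · simpa using (h 1 one_pos).trans (by simpa using hA.le)
  · calc L ≤ B * (A / B) - A - A * log (A / B) := h _ (div_pos hA hB)
      _ = B * negMulLog (A / B) := by
        rw [negMulLog, mul_div_cancel₀ _ hB.ne']
        field_simp
        ring

lemma mul_negMulLog_div {A B : ℝ} (h : B = 0 → A = 0) :
    B * negMulLog (A / B) = negMulLog A + A * log B := by
  by_cases hB : B = 0
  · simp [hB, h hB]
  by_cases hA : A = 0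
  · simp [hA]
  rw [negMulLog, negMulLog, log_div hA hB]
  field_simp
  ring

lemma mul_negMulLog_div_le {w a v : ℝ} (ha : 0 ≤ a) (haw : a ≤ w) (hv : 0 < v) :
    w * negMulLog (a / w) ≤ w * v - a - a * log v := by
  rcases (ha.trans haw).eq_or_lt with rfl | hw
  · obtain rfl : a = 0 := le_antisymm haw ha
    simp
  · have := mul_le_mul_of_nonneg_left
      (negMulLog_le_sub_sub_mul_log (div_nonneg ha hw.le) hv) hw.le
    calc w * negMulLog (a / w) ≤ w * (v - a / w - a / w * log v) := this
      _ = w * v - a - a * log v := by field_simp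

lemma sum_mul_negMulLog_div_le {ι : Type*} (s : Finset ι) {w a : ι → ℝ}
    (ha : ∀ i ∈ s, 0 ≤ a i) (haw : ∀ i ∈ s, a i ≤ w i) :
    ∑ i ∈ s, w i * negMulLog (a i / w i) ≤
      (∑ i ∈ s, w i) * negMulLog ((∑ i ∈ s, a i) / ∑ i ∈ s, w i) := by
  refine le_mul_negMulLog_div (Finset.sum_nonneg ha)
    (Finset.sum_nonneg fun i hi => (ha i hi).trans (haw i hi)) fun v hv => ?_
  calc ∑ i ∈ s, w i * negMulLog (a i / w i) ≤ ∑ i ∈ s, (w i * v - a i - a i * log v) :=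
        Finset.sum_le_sum fun i hi => mul_negMulLog_div_le (ha i hi) (haw i hi) hv
    _ = (∑ i ∈ s, w i) * v - ∑ i ∈ s, a i - (∑ i ∈ s, a i) * log v := by
        rw [Finset.sum_sub_distrib, Finset.sum_sub_distrib, Finset.sum_mul, Finset.sum_mul]

end Real

open Real (negMulLog)

section Families

variable {ι ι' κ κ' γ : Type*} [Fintype ι] [Fintype ι'] [Fintype κ] [Fintype κ'] [Fintype γ]

/-- `Φ ∨ Ψ`, indexed by `ι × κ` rather than by `Fin (m * n)` as in `PartUnity.join`. -/
def famJoin (f : ι → X → ℝ) (g : κ → X → ℝ) : ι × κ → X → ℝ := fun p x => f p.1 x * g p.2 x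

structure IsContPartUnity [TopologicalSpace X] (f : ι → X → ℝ) : Prop where
  continuous : ∀ i, Continuous (f i)
  nonneg : ∀ i x, 0 ≤ f i x
  sum_eq_one : ∀ x, ∑ i, f i x = 1

namespace IsContPartUnity

variable [TopologicalSpace X] {f : ι → X → ℝ} {g : κ → X → ℝ}

lemma le_one (hf : IsContPartUnity f) (i : ι) (x : X) : f i x ≤ 1 :=
  hf.sum_eq_one x ▸ Finset.single_le_sum (fun j _ => hf.nonneg j x) (Finset.mem_univ i)

lemma famJoin (hf : IsContPartUnity f) (hg : IsContPartUnity g) :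
    IsContPartUnity (famJoin f g) where
  continuous p := (hf.continuous p.1).mul (hg.continuous p.2)
  nonneg p x := mul_nonneg (hf.nonneg p.1 x) (hg.nonneg p.2 x)
  sum_eq_one x := by
    rw [Fintype.sum_prod_type]
    simp only [_root_.famJoin, ← Finset.sum_mul_sum, hf.sum_eq_one, hg.sum_eq_one, one_mul]

lemma comp (hf : IsContPartUnity f) {T : X → X} (hT : Continuous T) :
    IsContPartUnity fun i x => f i (T x) where
  continuous i := (hf.continuous i).comp hT
  nonneg i x := hf.nonneg i (T x)
  sum_eq_one x := hf.sum_eq_one (T x)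

end IsContPartUnity

variable [MeasurableSpace X] (μ : Measure X)

/-- The summand of `statEnt`, written with `negMulLog`. -/
noncomputable def entropyTerm (φ : X → ℝ) : ℝ :=
  negMulLog (∫ x, φ x ∂μ) - ∫ x, negMulLog (φ x) ∂μ

noncomputable def famEntropy (f : ι → X → ℝ) : ℝ := ∑ i, entropyTerm μ (f i)

/-- `μ(ψ) H̃_{μ_ψ}({φ})`. -/
noncomputable def condEntropyTerm (φ ψ : X → ℝ) : ℝ :=
  (∫ x, ψ x ∂μ) * negMulLog ((∫ x, φ x * ψ x ∂μ) / ∫ x, ψ x ∂μ) - ∫ x, ψ x * negMulLog (φ x) ∂μ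

/-- `H̃_μ(Φ | Ψ)`, i.e. `condStatEnt` with the conditional measures `condMeas` unfolded. -/
noncomputable def famCondEntropy (f : ι → X → ℝ) (g : κ → X → ℝ) : ℝ :=
  ∑ j, ∑ i, condEntropyTerm μ (f i) (g j)

variable {μ}

lemma famEntropy_congr {f : ι → X → ℝ} {f' : ι' → X → ℝ} (e : ι ≃ ι')
    (h : ∀ i, f' (e i) = f i) : famEntropy μ f = famEntropy μ f' :=
  Fintype.sum_equiv e _ _ fun i => by rw [h]

lemma famCondEntropy_congr {f : ι → X → ℝ} {f' : ι' → X → ℝ} {g : κ → X → ℝ}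
    {g' : κ' → X → ℝ} (e : ι ≃ ι') (e' : κ ≃ κ') (hf : ∀ i, f' (e i) = f i)
    (hg : ∀ j, g' (e' j) = g j) : famCondEntropy μ f g = famCondEntropy μ f' g' :=
  Fintype.sum_equiv e' _ _ fun j => Fintype.sum_equiv e _ _ fun i => by rw [hf, hg]

lemma famEntropy_famJoin_comm (f : ι → X → ℝ) (g : κ → X → ℝ) :
    famEntropy μ (famJoin f g) = famEntropy μ (famJoin g f) :=
  famEntropy_congr (Equiv.prodComm ι κ) fun _ => funext fun _ => mul_comm _ _

lemma famEntropy_famJoin_assoc (f : ι → X → ℝ) (g : κ → X → ℝ) (h : γ → X → ℝ) :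
    famEntropy μ (famJoin (famJoin f g) h) = famEntropy μ (famJoin f (famJoin g h)) :=
  famEntropy_congr (Equiv.prodAssoc ι κ γ) fun _ => funext fun _ => (mul_assoc _ _ _).symm

lemma famCondEntropy_famJoin_comm (f : ι → X → ℝ) (g : κ → X → ℝ) (h : γ → X → ℝ) :
    famCondEntropy μ f (famJoin g h) = famCondEntropy μ f (famJoin h g) :=
  famCondEntropy_congr (Equiv.refl ι) (Equiv.prodComm κ γ) (fun _ => rfl)
    fun _ => funext fun _ => mul_comm _ _

lemma famCondEntropy_comp {T : X → X} (hT : MeasurePreserving T μ μ) {f : ι → X → ℝ}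
    {g : κ → X → ℝ} (hf : ∀ i, Measurable (f i)) (hg : ∀ j, Measurable (g j)) :
    famCondEntropy μ (fun i x => f i (T x)) (fun j x => g j (T x)) = famCondEntropy μ f g := by
  have hcomp : ∀ u : X → ℝ, Measurable u → ∫ x, u (T x) ∂μ = ∫ x, u x ∂μ := fun u hu => by
    conv_rhs => rw [← hT.map_eq]
    rw [integral_map hT.measurable.aemeasurable hu.aestronglyMeasurable]
  simp only [famCondEntropy, condEntropyTerm]
  refine Finset.sum_congr rfl fun j _ => Finset.sum_congr rfl fun i _ => ?_
  rw [hcomp _ (hg j), hcomp (fun x => f i x * g j x) ((hf i).mul (hg j)),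
    hcomp (fun x => g j x * negMulLog (f i x))
      ((hg j).mul (Real.continuous_negMulLog.measurable.comp (hf i)))]

end Families

section FiniteMeasure

variable {ι κ κ' γ : Type*} [Fintype ι] [Fintype κ] [Fintype κ'] [Fintype γ]
variable [TopologicalSpace X] [CompactSpace X] [MeasurableSpace X] [OpensMeasurableSpace X]
  {μ : Measure X} [IsFiniteMeasure μ]

lemma Continuous.integrable_of_compactSpace {u : X → ℝ} (hu : Continuous u) : Integrable u μ :=
  hu.integrable_of_hasCompactSupport (.of_compactSpace u)

lemma integral_mul_le_integral {φ ψ : X → ℝ} (hφ : Continuous φ) (hψ : Continuous ψ)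
    (hφ1 : ∀ x, φ x ≤ 1) (hψ0 : ∀ x, 0 ≤ ψ x) : ∫ x, φ x * ψ x ∂μ ≤ ∫ x, ψ x ∂μ :=
  integral_mono (hφ.mul hψ).integrable_of_compactSpace hψ.integrable_of_compactSpace fun x =>
    mul_le_of_le_one_left (hψ0 x) (hφ1 x)

lemma IsContPartUnity.sum_integral_mul {f : ι → X → ℝ} (hf : IsContPartUnity f) {u : X → ℝ}
    (hu : Continuous u) : ∑ i, ∫ x, f i x * u x ∂μ = ∫ x, u x ∂μ := by
  calc ∑ i, ∫ x, f i x * u x ∂μ = ∫ x, ∑ i, f i x * u x ∂μ :=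
        (integral_finsetSum _ fun i _ => ((hf.continuous i).mul hu).integrable_of_compactSpace).symm
    _ = ∫ x, u x ∂μ := by simp only [← Finset.sum_mul, hf.sum_eq_one, one_mul]

lemma condEntropyTerm_nonneg {φ ψ : X → ℝ} (hφ : Continuous φ) (hψ : Continuous ψ)
    (hφ0 : ∀ x, 0 ≤ φ x) (hψ0 : ∀ x, 0 ≤ ψ x) : 0 ≤ condEntropyTerm μ φ ψ := by
  rw [condEntropyTerm, sub_nonneg]
  refine Real.le_mul_negMulLog_div (integral_nonneg fun x => mul_nonneg (hφ0 x) (hψ0 x))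
    (integral_nonneg hψ0) fun v hv => ?_
  calc ∫ x, ψ x * negMulLog (φ x) ∂μ
      ≤ ∫ x, (ψ x * v - φ x * ψ x - φ x * ψ x * Real.log v) ∂μ := by
        refine integral_mono (hψ.mul (Real.continuous_negMulLog.comp hφ)).integrable_of_compactSpace
          (by fun_prop : Continuous _).integrable_of_compactSpace fun x => ?_
        have := mul_le_mul_of_nonneg_left (Real.negMulLog_le_sub_sub_mul_log (hφ0 x) hv) (hψ0 x)
        linarith
    _ = (∫ x, ψ x ∂μ) * v - ∫ x, φ x * ψ x ∂μ - (∫ x, φ x * ψ x ∂μ) * Real.log v := by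
        have hψi : Integrable (fun x => ψ x * v) μ := (hψ.mul_const v).integrable_of_compactSpace
        have hφψi : Integrable (fun x => φ x * ψ x) μ := (hφ.mul hψ).integrable_of_compactSpace
        have hdiff : Integrable (fun x => ψ x * v - φ x * ψ x) μ := hψi.sub hφψi
        rw [integral_sub hdiff (hφψi.mul_const _), integral_sub hψi hφψi,
          integral_mul_const, integral_mul_const]

lemma famCondEntropy_nonneg {f : ι → X → ℝ} {g : κ → X → ℝ} (hf : IsContPartUnity f)
    (hg : IsContPartUnity g) : 0 ≤ famCondEntropy μ f g :=
  Finset.sum_nonneg fun j _ => Finset.sum_nonneg fun i _ =>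
    condEntropyTerm_nonneg (hf.continuous i) (hg.continuous j) (hf.nonneg i) (hg.nonneg j)

lemma sum_entropyTerm_mul {f : ι → X → ℝ} (hf : IsContPartUnity f) {ψ : X → ℝ}
    (hψ : Continuous ψ) (hψ0 : ∀ x, 0 ≤ ψ x) :
    ∑ i, entropyTerm μ (fun x => f i x * ψ x) =
      entropyTerm μ ψ + ∑ i, condEntropyTerm μ (f i) ψ := by
  set B := ∫ x, ψ x ∂μ
  have key : ∀ i, entropyTerm μ (fun x => f i x * ψ x) = condEntropyTerm μ (f i) ψ
      - (∫ x, f i x * ψ x ∂μ) * Real.log B - ∫ x, f i x * negMulLog (ψ x) ∂μ := fun i => by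
    have hAB : B = 0 → ∫ x, f i x * ψ x ∂μ = 0 := fun hB =>
      le_antisymm (hB ▸ integral_mul_le_integral (hf.continuous i) hψ (hf.le_one i) hψ0)
        (integral_nonneg fun x => mul_nonneg (hf.nonneg i x) (hψ0 x))
    have hsplit : ∫ x, negMulLog (f i x * ψ x) ∂μ =
        ∫ x, ψ x * negMulLog (f i x) ∂μ + ∫ x, f i x * negMulLog (ψ x) ∂μ := by
      simp only [Real.negMulLog_mul]
      exact integral_add
        (hψ.mul (Real.continuous_negMulLog.comp (hf.continuous i))).integrable_of_compactSpace
        ((hf.continuous i).mul (Real.continuous_negMulLog.comp hψ)).integrable_of_compactSpace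
    rw [entropyTerm, condEntropyTerm, Real.mul_negMulLog_div hAB, hsplit]
    ring
  rw [Finset.sum_congr rfl fun i _ => key i, Finset.sum_sub_distrib, Finset.sum_sub_distrib,
    ← Finset.sum_mul, hf.sum_integral_mul hψ,
    hf.sum_integral_mul (u := fun x => negMulLog (ψ x)) (Real.continuous_negMulLog.comp hψ),
    entropyTerm, Real.negMulLog]
  ring

lemma famEntropy_famJoin {f : ι → X → ℝ} {g : κ → X → ℝ} (hf : IsContPartUnity f)
    (hg : IsContPartUnity g) :
    famEntropy μ (famJoin f g) = famEntropy μ g + famCondEntropy μ f g := by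
  rw [famEntropy, Fintype.sum_prod_type_right, famEntropy, famCondEntropy, ← Finset.sum_add_distrib]
  exact Finset.sum_congr rfl fun j _ => sum_entropyTerm_mul hf (hg.continuous j) (hg.nonneg j)

lemma famEntropy_le_add_famCondEntropy {f : ι → X → ℝ} {g : κ → X → ℝ}
    (hf : IsContPartUnity f) (hg : IsContPartUnity g) :
    famEntropy μ f ≤ famEntropy μ g + famCondEntropy μ f g := by
  have h₁ := famEntropy_famJoin (μ := μ) hf hg
  have h₂ := famEntropy_famJoin (μ := μ) hg hf
  rw [famEntropy_famJoin_comm] at h₁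
  linarith [famCondEntropy_nonneg (μ := μ) hg hf]

lemma famCondEntropy_famJoin_left {f : ι → X → ℝ} {f' : κ → X → ℝ} {g : γ → X → ℝ}
    (hf : IsContPartUnity f) (hf' : IsContPartUnity f') (hg : IsContPartUnity g) :
    famCondEntropy μ (famJoin f f') g =
      famCondEntropy μ f' g + famCondEntropy μ f (famJoin f' g) := by
  have h₁ := famEntropy_famJoin (μ := μ) (hf.famJoin hf') hg
  have h₂ := famEntropy_famJoin (μ := μ) hf (hf'.famJoin hg)
  have h₃ := famEntropy_famJoin (μ := μ) hf' hg
  rw [famEntropy_famJoin_assoc] at h₁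
  linarith

lemma sum_condEntropyTerm_mul_le {φ ψ : X → ℝ} (hφ : Continuous φ) (hφ0 : ∀ x, 0 ≤ φ x)
    (hφ1 : ∀ x, φ x ≤ 1) {g : κ → X → ℝ} (hg : IsContPartUnity g) (hψ : Continuous ψ)
    (hψ0 : ∀ x, 0 ≤ ψ x) :
    ∑ j, condEntropyTerm μ φ (fun x => g j x * ψ x) ≤ condEntropyTerm μ φ ψ := by
  have hw : ∑ j, ∫ x, g j x * ψ x ∂μ = ∫ x, ψ x ∂μ := hg.sum_integral_mul hψ
  have ha : ∑ j, ∫ x, φ x * (g j x * ψ x) ∂μ = ∫ x, φ x * ψ x ∂μ := by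
    simp only [mul_left_comm (φ _)]
    exact hg.sum_integral_mul (hφ.mul hψ)
  have hc : ∑ j, ∫ x, g j x * ψ x * negMulLog (φ x) ∂μ = ∫ x, ψ x * negMulLog (φ x) ∂μ := by
    simp only [mul_assoc]
    exact hg.sum_integral_mul (hψ.mul (Real.continuous_negMulLog.comp hφ))
  have jensen := Real.sum_mul_negMulLog_div_le Finset.univ
    (w := fun j => ∫ x, g j x * ψ x ∂μ) (a := fun j => ∫ x, φ x * (g j x * ψ x) ∂μ)
    (fun j _ => integral_nonneg fun x => mul_nonneg (hφ0 x) (mul_nonneg (hg.nonneg j x) (hψ0 x)))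
    (fun j _ => integral_mul_le_integral hφ ((hg.continuous j).mul hψ) hφ1
      fun x => mul_nonneg (hg.nonneg j x) (hψ0 x))
  rw [hw, ha] at jensen
  simp only [condEntropyTerm, Finset.sum_sub_distrib, hc]
  linarith

lemma famCondEntropy_famJoin_le {f : ι → X → ℝ} {g : κ → X → ℝ} {h : γ → X → ℝ}
    (hf : IsContPartUnity f) (hg : IsContPartUnity g) (hh : IsContPartUnity h) :
    famCondEntropy μ f (famJoin g h) ≤ famCondEntropy μ f h := by
  rw [famCondEntropy, Fintype.sum_prod_type_right, famCondEntropy]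
  refine Finset.sum_le_sum fun k _ => ?_
  rw [Finset.sum_comm]
  exact Finset.sum_le_sum fun i _ => sum_condEntropyTerm_mul_le (hf.continuous i) (hf.nonneg i)
    (hf.le_one i) hg (hh.continuous k) (hh.nonneg k)

lemma famCondEntropy_famJoin_famJoin_le {f : ι → X → ℝ} {f' : κ → X → ℝ} {g : γ → X → ℝ}
    {g' : κ' → X → ℝ} (hf : IsContPartUnity f)
    (hf' : IsContPartUnity f') (hg : IsContPartUnity g) (hg' : IsContPartUnity g') :
    famCondEntropy μ (famJoin f f') (famJoin g g') ≤
      famCondEntropy μ f g + famCondEntropy μ f' g' := by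
  rw [famCondEntropy_famJoin_left hf hf' (hg.famJoin hg'), add_comm]
  refine add_le_add ?_ (famCondEntropy_famJoin_le hf' hg hg')
  calc famCondEntropy μ f (famJoin f' (famJoin g g'))
      ≤ famCondEntropy μ f (famJoin g g') := famCondEntropy_famJoin_le hf hf' (hg.famJoin hg')
    _ = famCondEntropy μ f (famJoin g' g) := famCondEntropy_famJoin_comm f g g'
    _ ≤ famCondEntropy μ f g := famCondEntropy_famJoin_le hf hg' hg

lemma abs_integral_mul_sub_le {φ ψ : X → ℝ} (hφ : Continuous φ) (hψ : Continuous ψ)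
    (hψ0 : ∀ x, 0 ≤ ψ x) {s δ : ℝ} (h : ∀ x, ψ x ≠ 0 → |φ x - s| ≤ δ) :
    |∫ x, φ x * ψ x ∂μ - s * ∫ x, ψ x ∂μ| ≤ δ * ∫ x, ψ x ∂μ := by
  have hφψ : Integrable (fun x => φ x * ψ x) μ := (hφ.mul hψ).integrable_of_compactSpace
  have hsψ : Integrable (fun x => s * ψ x) μ := (hψ.const_mul s).integrable_of_compactSpace
  rw [← integral_const_mul, ← integral_sub hφψ hsψ, ← integral_const_mul]
  refine abs_integral_le_integral_abs.trans <| integral_mono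
    ((hφ.mul hψ).sub (hψ.const_mul s)).abs.integrable_of_compactSpace
    (hψ.const_mul δ).integrable_of_compactSpace fun x => ?_
  rcases eq_or_ne (ψ x) 0 with h0 | h0
  · simp [h0]
  · rw [← sub_mul, abs_mul, abs_of_nonneg (hψ0 x)]
    exact mul_le_mul_of_nonneg_right (h x h0) (hψ0 x)

lemma condEntropyTerm_le_mul_integral {φ ψ : X → ℝ} (hφ : Continuous φ) (hφ0 : ∀ x, 0 ≤ φ x)
    (hφ1 : ∀ x, φ x ≤ 1) (hψ : Continuous ψ) (hψ0 : ∀ x, 0 ≤ ψ x) {δ ε : ℝ}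
    (hη : ∀ s ∈ Icc (0 : ℝ) 1, ∀ t ∈ Icc (0 : ℝ) 1, |s - t| ≤ δ → negMulLog s - negMulLog t ≤ ε)
    (hosc : ∀ x y, ψ x ≠ 0 → ψ y ≠ 0 → |φ x - φ y| ≤ δ) :
    condEntropyTerm μ φ ψ ≤ ε * ∫ x, ψ x ∂μ := by
  rcases (integral_nonneg hψ0 : 0 ≤ ∫ x, ψ x ∂μ).eq_or_lt with hB | hB
  · rw [condEntropyTerm, ← hB, zero_mul, mul_zero, zero_sub, neg_nonpos]
    exact integral_nonneg fun x => mul_nonneg (hψ0 x) (Real.negMulLog_nonneg (hφ0 x) (hφ1 x))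
  set B := ∫ x, ψ x ∂μ
  set A := ∫ x, φ x * ψ x ∂μ
  have hψη : Integrable (fun x => ψ x * negMulLog (φ x)) μ :=
    (hψ.mul (Real.continuous_negMulLog.comp hφ)).integrable_of_compactSpace
  have hv : A / B ∈ Icc (0 : ℝ) 1 :=
    ⟨div_nonneg (integral_nonneg fun x => mul_nonneg (hφ0 x) (hψ0 x)) hB.le,
      div_le_one_of_le₀ (integral_mul_le_integral hφ hψ hφ1 hψ0) hB.le⟩
  have hclose : ∀ x, ψ x ≠ 0 → negMulLog (A / B) - negMulLog (φ x) ≤ ε := fun x hx =>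
    hη _ hv _ ⟨hφ0 x, hφ1 x⟩ <| by
      have := abs_integral_mul_sub_le (μ := μ) hφ hψ hψ0 fun y hy => hosc y x hy hx
      rwa [show A / B - φ x = (A - φ x * B) / B by field_simp, abs_div, abs_of_pos hB,
        div_le_iff₀ hB]
  calc condEntropyTerm μ φ ψ = ∫ x, ψ x * (negMulLog (A / B) - negMulLog (φ x)) ∂μ := by
        simp only [mul_sub]
        rw [integral_sub (hψ.mul_const _).integrable_of_compactSpace hψη, integral_mul_const]
        rfl
    _ ≤ ∫ x, ψ x * ε ∂μ := by
        have hcont : Continuous fun x => ψ x * (negMulLog (A / B) - negMulLog (φ x)) := by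
          fun_prop
        refine integral_mono hcont.integrable_of_compactSpace
          (hψ.mul_const ε).integrable_of_compactSpace fun x => ?_
        rcases eq_or_ne (ψ x) 0 with h0 | h0
        · simp [h0]
        · exact mul_le_mul_of_nonneg_left (hclose x h0) (hψ0 x)
    _ = ε * B := by rw [integral_mul_const, mul_comm]

end FiniteMeasure

section ProbabilityMeasure

variable {ι : Type*} [Fintype ι] [TopologicalSpace X] [CompactSpace X] [MeasurableSpace X]
  [OpensMeasurableSpace X] {μ : Measure X} [IsProbabilityMeasure μ]

lemma entropyTerm_nonneg {φ : X → ℝ} (hφ : Continuous φ) (hφ0 : ∀ x, 0 ≤ φ x) :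
    0 ≤ entropyTerm μ φ := by
  simpa [condEntropyTerm, entropyTerm] using
    condEntropyTerm_nonneg (μ := μ) hφ continuous_const hφ0 fun _ => zero_le_one

lemma famEntropy_nonneg {f : ι → X → ℝ} (hf : IsContPartUnity f) : 0 ≤ famEntropy μ f :=
  Finset.sum_nonneg fun i _ => entropyTerm_nonneg (hf.continuous i) (hf.nonneg i)

lemma IsContPartUnity.sum_integral {f : ι → X → ℝ} (hf : IsContPartUnity f) :
    ∑ i, ∫ x, f i x ∂μ = 1 := by
  simpa using hf.sum_integral_mul (μ := μ) (u := fun _ => 1) continuous_const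

lemma famEntropy_le_log_card {f : ι → X → ℝ} (hf : IsContPartUnity f) :
    famEntropy μ f ≤ Real.log (Fintype.card ι) := by
  have jensen := Real.sum_mul_negMulLog_div_le Finset.univ (w := fun _ => 1)
    (a := fun i => ∫ x, f i x ∂μ) (fun i _ => integral_nonneg (hf.nonneg i)) fun i _ => by
      simpa using integral_mul_le_integral (μ := μ) (hf.continuous i) continuous_const
        (hf.le_one i) fun _ => zero_le_one
  simp only [one_mul, div_one, hf.sum_integral, Finset.sum_const, Finset.card_univ, nsmul_eq_mul,
    mul_one] at jensen
  calc famEntropy μ f ≤ ∑ i, negMulLog (∫ x, f i x ∂μ) :=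
        Finset.sum_le_sum fun i _ => sub_le_self _ <| integral_nonneg fun x =>
          Real.negMulLog_nonneg (hf.nonneg i x) (hf.le_one i x)
    _ ≤ Fintype.card ι * negMulLog (1 / Fintype.card ι) := jensen
    _ = Real.log (Fintype.card ι) := by
        rcases eq_or_ne (Fintype.card ι : ℝ) 0 with h | h
        · simp [h]
        · rw [Real.negMulLog, one_div, Real.log_inv]
          field_simp

end ProbabilityMeasure

namespace PartUnity

lemma Cont.isContPartUnity [TopologicalSpace X] {Φ : PartUnity X} (hΦ : Φ.Cont) :
    IsContPartUnity Φ.f :=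
  ⟨hΦ, Φ.nonneg, Φ.sum_one⟩

lemma Cont.dyn [TopologicalSpace X] {T : X → X} (hT : Continuous T) {Φ : PartUnity X}
    (hΦ : Φ.Cont) : ∀ n, (dyn T Φ n).Cont
  | 0 => fun _ => continuous_const
  | n + 1 => fun _ => (hΦ _).mul ((hΦ.dyn hT n _).comp hT)

lemma n_dyn (T : X → X) (Φ : PartUnity X) : ∀ n, (dyn T Φ n).n = Φ.n ^ n
  | 0 => rfl
  | n + 1 => by
    rw [pow_succ', ← n_dyn T Φ n]
    rfl

lemma join_f_finProdFinEquiv (Φ Ψ : PartUnity X) (p : Fin Φ.n × Fin Ψ.n) :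
    (Φ.join Ψ).f (finProdFinEquiv p) = famJoin Φ.f Ψ.f p := by
  funext x
  simp [join, famJoin]

lemma dist_le_diam [PseudoMetricSpace X] [CompactSpace X] (Ψ : PartUnity X) {j : Fin Ψ.n} {x y : X}
    (hx : x ∈ tsupport (Ψ.f j)) (hy : y ∈ tsupport (Ψ.f j)) : dist x y ≤ Ψ.diam :=
  (Metric.dist_le_diam_of_mem Metric.isBounded_of_compactSpace hx hy).trans
    (le_ciSup (f := fun i => Metric.diam (tsupport (Ψ.f i))) (Set.finite_range _).bddAbove j)

end PartUnity

section Bridge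

variable [MeasurableSpace X] {μ : Measure X}

lemma statEnt_eq_famEntropy (Φ : PartUnity X) : statEnt μ Φ = famEntropy μ Φ.f := by
  refine Finset.sum_congr rfl fun i _ => ?_
  simp only [entropyTerm, Real.negMulLog, neg_mul, integral_neg]
  ring

lemma famCondEntropy_join_join (Φ Φ' Ψ Ψ' : PartUnity X) :
    famCondEntropy μ (Φ.join Φ').f (Ψ.join Ψ').f =
      famCondEntropy μ (famJoin Φ.f Φ'.f) (famJoin Ψ.f Ψ'.f) :=
  (famCondEntropy_congr finProdFinEquiv finProdFinEquiv (Φ.join_f_finProdFinEquiv Φ')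
    (Ψ.join_f_finProdFinEquiv Ψ')).symm

end Bridge

section Dynamics

open PartUnity (dyn)

variable [TopologicalSpace X] [CompactSpace X] [MeasurableSpace X] [OpensMeasurableSpace X]
  {μ : Measure X} {T : X → X} {Φ Ψ : PartUnity X}

lemma famCondEntropy_dyn_le [IsFiniteMeasure μ] (hT : Continuous T)
    (hμT : MeasurePreserving T μ μ) (hΦ : Φ.Cont) (hΨ : Ψ.Cont) (n : ℕ) :
    famCondEntropy μ (dyn T Φ n).f (dyn T Ψ n).f ≤
      n * famCondEntropy μ Φ.f Ψ.f := by
  induction n with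
  | zero =>
    rcases eq_or_ne (μ.real univ) 0 with h | h <;>
      simp [dyn, PartUnity.triv, famCondEntropy, condEntropyTerm, h]
  | succ n ih =>
    have hΦn := (hΦ.dyn hT n).isContPartUnity
    have hΨn := (hΨ.dyn hT n).isContPartUnity
    rw [dyn, dyn, famCondEntropy_join_join]
    calc _ ≤ famCondEntropy μ Φ.f Ψ.f + famCondEntropy μ ((dyn T Φ n).comp T).f
          ((dyn T Ψ n).comp T).f :=
          famCondEntropy_famJoin_famJoin_le hΦ.isContPartUnity (hΦn.comp hT) hΨ.isContPartUnity
            (hΨn.comp hT)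
      _ = famCondEntropy μ Φ.f Ψ.f + famCondEntropy μ (dyn T Φ n).f
          (dyn T Ψ n).f :=
          congrArg (_ + ·) (famCondEntropy_comp hμT (fun i => (hΦn.continuous i).measurable)
            fun j => (hΨn.continuous j).measurable)
      _ ≤ (n + 1 : ℕ) * famCondEntropy μ Φ.f Ψ.f := by
          push_cast
          linarith

lemma statEnt_dyn_le [IsFiniteMeasure μ] (hT : Continuous T) (hμT : MeasurePreserving T μ μ)
    (hΦ : Φ.Cont) (hΨ : Ψ.Cont) (n : ℕ) :
    statEnt μ (dyn T Φ n) ≤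
      statEnt μ (dyn T Ψ n) + n * famCondEntropy μ Φ.f Ψ.f := by
  rw [statEnt_eq_famEntropy, statEnt_eq_famEntropy]
  linarith [famEntropy_le_add_famCondEntropy (μ := μ) (hΦ.dyn hT n).isContPartUnity
    (hΨ.dyn hT n).isContPartUnity, famCondEntropy_dyn_le hT hμT hΦ hΨ n]

variable [IsProbabilityMeasure μ]

lemma statEnt_dyn_div_nonneg (hT : Continuous T) (hΦ : Φ.Cont) (n : ℕ) :
    0 ≤ statEnt μ (dyn T Φ n) / n := by
  rw [statEnt_eq_famEntropy]
  exact div_nonneg (famEntropy_nonneg (hΦ.dyn hT n).isContPartUnity) n.cast_nonneg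

lemma statEnt_dyn_div_le_log (hT : Continuous T) (hΦ : Φ.Cont) (n : ℕ) :
    statEnt μ (dyn T Φ n) / n ≤ Real.log Φ.n := by
  rcases n.eq_zero_or_pos with rfl | hn
  · simpa using Real.log_natCast_nonneg Φ.n
  rw [div_le_iff₀ (by exact_mod_cast hn), statEnt_eq_famEntropy]
  calc famEntropy μ (dyn T Φ n).f ≤ Real.log (Fintype.card (Fin (dyn T Φ n).n)) :=
        famEntropy_le_log_card (hΦ.dyn hT n).isContPartUnity
    _ = Real.log Φ.n * n := by
        rw [Fintype.card_fin, PartUnity.n_dyn, Nat.cast_pow, Real.log_pow, mul_comm]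

lemma locEnt_le_add_famCondEntropy (hT : Continuous T) (hμT : MeasurePreserving T μ μ)
    (hΦ : Φ.Cont) (hΨ : Ψ.Cont) :
    locEnt T μ Φ ≤ locEnt T μ Ψ + famCondEntropy μ Φ.f Ψ.f := by
  set c := famCondEntropy μ Φ.f Ψ.f
  set v := fun n : ℕ => statEnt μ (dyn T Ψ n) / n
  have hv : IsBoundedUnder (· ≤ ·) atTop v :=
    isBoundedUnder_of ⟨_, statEnt_dyn_div_le_log hT hΨ⟩
  have huv : ∀ n : ℕ, statEnt μ (dyn T Φ n) / n ≤ v n + c := fun n => by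
    rcases n.eq_zero_or_pos with rfl | hn
    · simpa [v] using famCondEntropy_nonneg hΦ.isContPartUnity hΨ.isContPartUnity
    have hn : (0 : ℝ) < n := by exact_mod_cast hn
    rw [div_le_iff₀ hn, add_mul, div_mul_cancel₀ _ hn.ne', mul_comm c]
    exact statEnt_dyn_le hT hμT hΦ hΨ n
  calc locEnt T μ Φ ≤ limsup (fun n => v n + c) atTop :=
        limsup_le_limsup (.of_forall huv)
          (isCoboundedUnder_le_of_le atTop (statEnt_dyn_div_nonneg hT hΦ))
          (isBoundedUnder_of ⟨_, fun n =>
            (add_le_add_iff_right c).2 (statEnt_dyn_div_le_log hT hΨ n)⟩)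
    _ = locEnt T μ Ψ + c :=
        limsup_add_const atTop v c hv
          (isCoboundedUnder_le_of_le atTop (statEnt_dyn_div_nonneg hT hΨ))

end Dynamics

section SmallDiameter

variable [PseudoMetricSpace X] [CompactSpace X] [MeasurableSpace X] [OpensMeasurableSpace X]
  {μ : Measure X} [IsProbabilityMeasure μ] {Φ : PartUnity X}

lemma exists_famCondEntropy_le_of_diam_lt (hΦ : Φ.Cont) {ε : ℝ} (hε : 0 < ε) :
    ∃ r > 0, ∀ Ψ : PartUnity X, Ψ.Cont → Ψ.diam < r → famCondEntropy μ Φ.f Ψ.f ≤ Φ.n * ε := by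
  obtain ⟨δ, hδ, hη⟩ := Metric.uniformContinuousOn_iff.1
    (isCompact_Icc.uniformContinuousOn_of_continuous Real.continuous_negMulLog.continuousOn) ε hε
  obtain ⟨r, hr, hΦr⟩ := Metric.uniformContinuous_iff.1
    (CompactSpace.uniformContinuous_of_continuous (continuous_pi fun i => hΦ i)) (δ / 2)
    (half_pos hδ)
  refine ⟨r, hr, fun Ψ hΨ hdiam => ?_⟩
  have hη' : ∀ s ∈ Icc (0 : ℝ) 1, ∀ t ∈ Icc (0 : ℝ) 1, |s - t| ≤ δ / 2 →
      negMulLog s - negMulLog t ≤ ε := fun s hs t ht hst => by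
    have := hη s hs t ht (by rw [Real.dist_eq]; linarith)
    rw [Real.dist_eq] at this
    exact (le_abs_self _).trans this.le
  have hosc : ∀ i j x y, Ψ.f j x ≠ 0 → Ψ.f j y ≠ 0 → |Φ.f i x - Φ.f i y| ≤ δ / 2 :=
    fun i j x y hx hy => by
      have hxy := (Ψ.dist_le_diam (subset_tsupport _ hx) (subset_tsupport _ hy)).trans_lt hdiam
      simpa [Real.dist_eq] using ((dist_le_pi_dist _ _ i).trans_lt (hΦr hxy)).le
  calc famCondEntropy μ Φ.f Ψ.f ≤ ∑ j, ∑ _i : Fin Φ.n, ε * ∫ x, Ψ.f j x ∂μ :=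
        Finset.sum_le_sum fun j _ => Finset.sum_le_sum fun i _ =>
          condEntropyTerm_le_mul_integral (hΦ i) (Φ.nonneg i) (Φ.le_one i) (hΨ j) (Ψ.nonneg j)
            hη' (hosc i j)
    _ = Φ.n * ε := by
        simp only [Finset.sum_const, Finset.card_univ, Fintype.card_fin, nsmul_eq_mul,
          ← Finset.mul_sum, hΨ.isContPartUnity.sum_integral, mul_one]

lemma tendsto_famCondEntropy_of_diam_tendsto_zero (hΦ : Φ.Cont) {Ψ : ℕ → PartUnity X}
    (hΨ : ∀ k, (Ψ k).Cont) (hdiam : Tendsto (fun k => (Ψ k).diam) atTop (𝓝 0)) :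
    Tendsto (fun k => famCondEntropy μ Φ.f (Ψ k).f) atTop (𝓝 0) := by
  refine tendsto_order.2 ⟨fun a ha => .of_forall fun k => ha.trans_le <|
    famCondEntropy_nonneg hΦ.isContPartUnity (hΨ k).isContPartUnity, fun a ha => ?_⟩
  obtain ⟨r, hr, hsmall⟩ :=
    exists_famCondEntropy_le_of_diam_lt (μ := μ) hΦ (div_pos ha (Nat.cast_add_one_pos Φ.n))
  filter_upwards [hdiam.eventually (gt_mem_nhds hr)] with k hk
  calc famCondEntropy μ Φ.f (Ψ k).f ≤ Φ.n * (a / (Φ.n + 1)) := hsmall _ (hΨ k) hk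
    _ < a := by
        rw [mul_div_assoc', div_lt_iff₀ (Nat.cast_add_one_pos Φ.n)]
        linarith

end SmallDiameter

theorem locEnt_tendsto_metEnt_of_diam_tendsto_zero_general {X : Type*} [MetricSpace X] [CompactSpace X]
    [MeasurableSpace X] [BorelSpace X]
    (T : X → X) (hT : Continuous T)
    (Ψ : ℕ → PartUnity X) (hΨc : ∀ k, (Ψ k).Cont)
    (hdiam : Filter.Tendsto (fun k => (Ψ k).diam) Filter.atTop (nhds 0))
    (μ : Measure X) [IsProbabilityMeasure μ] (hμ : MeasurePreserving T μ μ) :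
    Filter.Tendsto (fun k => ((locEnt T μ (Ψ k) : ℝ) : EReal)) Filter.atTop
      (nhds (metEnt T μ)) := by
  have hle : ∀ k, ((locEnt T μ (Ψ k) : ℝ) : EReal) ≤ metEnt T μ := fun k =>
    le_iSup (fun Φ : {Φ : PartUnity X // Φ.Cont} => ((locEnt T μ Φ.1 : ℝ) : EReal)) ⟨Ψ k, hΨc k⟩
  refine tendsto_order.2 ⟨fun a ha => ?_, fun a ha => .of_forall fun k => (hle k).trans_lt ha⟩
  obtain ⟨⟨Φ, hΦ⟩, haΦ⟩ := lt_iSup_iff.1 ha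
  have hlim := (continuous_coe_real_ereal.tendsto _).comp
    ((tendsto_famCondEntropy_of_diam_tendsto_zero (μ := μ) hΦ hΨc hdiam).const_sub (locEnt T μ Φ))
  rw [sub_zero] at hlim
  filter_upwards [hlim.eventually (lt_mem_nhds haΦ)] with k hk
  exact hk.trans_le <| EReal.coe_le_coe_iff.2 <| sub_le_iff_le_add.2 <|
    locEnt_le_add_famCondEntropy hT hμ hΦ (hΨc k)

/-- If `diam(Ψ_k) → 0` then `h̃_μ(T,Ψ_k) → h̃_μ(T)` for every
`T`-invariant Borel probability measure `μ`. -/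
theorem locEnt_tendsto_metEnt_of_diam_tendsto_zero {X : Type*} [MetricSpace X] [CompactSpace X] [Nonempty X]
    [MeasurableSpace X] [BorelSpace X]
    (T : X → X) (hT : Continuous T) (hTsurj : Function.Surjective T)
    (Ψ : ℕ → PartUnity X) (hΨc : ∀ k, (Ψ k).Cont)
    (hdiam : Filter.Tendsto (fun k => (Ψ k).diam) Filter.atTop (nhds 0))
    (μ : Measure X) [IsProbabilityMeasure μ] (hμ : MeasurePreserving T μ μ) :
    Filter.Tendsto (fun k => ((locEnt T μ (Ψ k) : ℝ) : EReal)) Filter.atTop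
      (nhds (metEnt T μ)) :=
  locEnt_tendsto_metEnt_of_diam_tendsto_zero_general T hT Ψ hΨc hdiam μ hμ
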